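/- arXiv:2409.11079 — 5 statements merged into one kernel-verified Lean document; each statement's English description precedes it below -/
import Mathlib

section
/- For every integer k ≥ 1 and every real ε > 0, there exist a metric space (X,d) with exactly n = 2k+1 points and a proper bipartition X = R ∪ B such that mst(R) + mst(B) ≥ ((3 − 4/(n−1))/(1+ε)) · mst(X). -/
/-!
Realise the spider with `k` legs in `ℓ¹(Fin k)`: centre `0`, knees `eᵢ`, feet `(1 + ε) eᵢ`. The
star of paths centre – knee – foot spans it with length `k (1 + ε)`. Colour the knees red and the
centre and the feet blue. Distinct red points are at distance `2` and distinct blue points at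
distance at least `1 + ε`, so every spanning tree of the red points has length at least
`2 (k - 1)` and every spanning tree of the `k + 1` blue points has length at least `(1 + ε) k`.
Their sum is at least `3k - 2 = (3 - 4 / (n - 1)) k`.
-/

open scoped Classical

/-- The length of a minimum spanning tree of a finite point set `S` in a metric space:
the infimum, over all trees with vertex set `S`, of the sum of distances over the edges. -/
noncomputable def mst {X : Type*} [MetricSpace X] (S : Finset X) : ℝ :=
  sInf {c : ℝ | ∃ G : SimpleGraph S, G.IsTree ∧
    c = ∑ᶠ e ∈ G.edgeSet,
      Sym2.lift ⟨fun (u v : S) => dist (u : X) (v : X), fun _ _ => dist_comm _ _⟩ e}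

open Finset

section MinimumSpanningTree

open SimpleGraph

variable {X : Type*} [MetricSpace X]

noncomputable def edgeLength (S : Finset X) : Sym2 S → ℝ :=
  Sym2.lift ⟨fun u v => dist (u : X) v, fun _ _ => dist_comm _ _⟩

lemma edgeLength_nonneg (S : Finset X) (e : Sym2 S) : 0 ≤ edgeLength S e := by
  induction e with
  | _ u v => exact dist_nonneg

lemma mst_eq_sInf (S : Finset X) :
    mst S = sInf {c | ∃ G : SimpleGraph S, G.IsTree ∧ c = ∑ e ∈ G.edgeFinset, edgeLength S e} := by
  simp only [mst, ← coe_edgeFinset, finsum_mem_coe_finset]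
  rfl

lemma mst_le_of_isTree {S : Finset X} {G : SimpleGraph S} (hG : G.IsTree) :
    mst S ≤ ∑ e ∈ G.edgeFinset, edgeLength S e := by
  rw [mst_eq_sInf]
  refine csInf_le ⟨0, ?_⟩ ⟨G, hG, rfl⟩
  rintro _ ⟨T, -, rfl⟩
  exact sum_nonneg fun e _ => edgeLength_nonneg S e

lemma mst_le_of_connected {S : Finset X} {G : SimpleGraph S} [Fintype G.edgeSet]
    (hG : G.Connected) :
    mst S ≤ ∑ e ∈ G.edgeFinset, edgeLength S e := by
  obtain ⟨T, hTG, hT⟩ := hG.exists_isTree_le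
  exact (mst_le_of_isTree hT).trans <| sum_le_sum_of_subset_of_nonneg (edgeFinset_mono hTG)
    fun e _ _ => edgeLength_nonneg S e

lemma mul_card_sub_one_le_mst {S : Finset X} (hS : S.Nonempty) {a : ℝ}
    (hd : ∀ x ∈ S, ∀ y ∈ S, x ≠ y → a ≤ dist x y) : a * (#S - 1) ≤ mst S := by
  have : Nonempty S := hS.to_subtype
  obtain ⟨T, -, hT⟩ := (connected_top (V := S)).exists_isTree_le
  rw [mst_eq_sInf]
  refine le_csInf ⟨_, T, hT, rfl⟩ ?_
  rintro _ ⟨G, hG, rfl⟩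
  have hcard : (#G.edgeFinset : ℝ) = #S - 1 := by
    have := hG.card_edgeFinset
    rw [Fintype.card_coe] at this
    rw [← this]; push_cast; ring
  calc a * (#S - 1) = ∑ _e ∈ G.edgeFinset, a := by rw [sum_const, nsmul_eq_mul, hcard, mul_comm]
    _ ≤ ∑ e ∈ G.edgeFinset, edgeLength S e := sum_le_sum fun e he => by
      induction e with
      | _ u v => exact hd u u.2 v v.2 fun h => (mem_edgeFinset.1 he).ne (Subtype.ext h)

/-- The edges `x — p x` form a connected graph on `S`. -/
lemma mst_le_sum_dist_of_iterate_eq {S : Finset X} (p : X → X) (hp : ∀ x ∈ S, p x ∈ S)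
    {root : X} (hroot : root ∈ S) (hreach : ∀ x ∈ S, ∃ n, p^[n] x = root) :
    mst S ≤ ∑ x ∈ S, dist x (p x) := by
  let q : S → S := fun x => ⟨p x, hp x x.2⟩
  let G : SimpleGraph S := fromEdgeSet (Set.range fun x => s(x, q x))
  have hstep (x : S) : G.Reachable x (q x) := by
    by_cases h : x = q x
    · rw [← h]
    · exact (show G.Adj x (q x) from (fromEdgeSet_adj _).2 ⟨Set.mem_range_self x, h⟩).reachable
  have hiter (n : ℕ) (x : S) : G.Reachable x (q^[n] x) := by
    induction n generalizing x with
    | zero => rfl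
    | succ n ih => exact (hstep x).trans (ih (q x))
  have hsemiconj : Function.Semiconj Subtype.val q p := fun _ => rfl
  have hconn : G.Connected := by
    have : Nonempty S := ⟨⟨root, hroot⟩⟩
    have hto_root (x : S) : G.Reachable x ⟨root, hroot⟩ := by
      obtain ⟨n, hn⟩ := hreach x x.2
      convert hiter n x
      rw [hsemiconj.iterate_right n x, hn]
    exact .mk fun x y => (hto_root x).trans (hto_root y).symm
  have hedges : G.edgeFinset ⊆ univ.image fun x => s(x, q x) := by
    intro e he
    rw [mem_edgeFinset, edgeSet_fromEdgeSet] at he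
    obtain ⟨⟨x, rfl⟩, -⟩ := he
    exact mem_image_of_mem _ (mem_univ x)
  calc mst S ≤ ∑ e ∈ G.edgeFinset, edgeLength S e := mst_le_of_connected hconn
    _ ≤ ∑ e ∈ univ.image fun x => s(x, q x), edgeLength S e :=
      sum_le_sum_of_subset_of_nonneg hedges fun e _ _ => edgeLength_nonneg S e
    _ ≤ ∑ x : S, edgeLength S s(x, q x) :=
      sum_image_le_of_nonneg fun e _ => edgeLength_nonneg S e
    _ = ∑ x ∈ S, dist x (p x) := sum_coe_sort S fun x => dist x (p x)

end MinimumSpanningTree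

lemma PiLp.dist_single_of_ne {ι : Type*} [Fintype ι] [DecidableEq ι] {β : ι → Type*}
    [∀ i, SeminormedAddCommGroup (β i)] {i j : ι} (hij : i ≠ j) (a : β i) (b : β j) :
    dist (single 1 i a) (single 1 j b) = ‖a‖ + ‖b‖ := by
  rw [dist_eq_of_L1, Fintype.sum_eq_add i j hij]
  · rw [single_eq_same, single_eq_of_ne' 1 hij, single_eq_of_ne 1 hij, single_eq_same,
      dist_zero_right, dist_zero_left]
  · rintro l ⟨hli, hlj⟩
    rw [single_eq_of_ne 1 hli, single_eq_of_ne 1 hlj, dist_self]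

-- `ε` only selects the metric instance below.
def Spider (k : ℕ) (_ε : ℝ) : Type := Option (Fin k × Bool)

namespace Spider

variable {k : ℕ} {ε : ℝ}

instance : Fintype (Spider k ε) := inferInstanceAs (Fintype (Option (Fin k × Bool)))

lemma card_eq : Fintype.card (Spider k ε) = 2 * k + 1 := by
  rw [show Fintype.card (Spider k ε) = Fintype.card (Option (Fin k × Bool)) from rfl,
    Fintype.card_option, Fintype.card_prod, Fintype.card_fin, Fintype.card_bool, mul_comm]

def center : Spider k ε := none

def knee (i : Fin k) : Spider k ε := some (i, false)

def foot (i : Fin k) : Spider k ε := some (i, true)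

noncomputable def toL1 (ε : ℝ) : Spider k ε → PiLp 1 fun _ : Fin k => ℝ
  | none => 0
  | some (i, b) => PiLp.single 1 i (if b then 1 + ε else 1)

lemma toL1_injective (hε : 0 < ε) : Function.Injective (toL1 (k := k) ε) := by
  have hpos (b : Bool) : (0 : ℝ) < if b then 1 + ε else 1 := by split <;> linarith
  have hheight : Function.Injective fun b : Bool => if b then 1 + ε else 1 := by
    intro b c h
    cases b <;> cases c <;> simp only [if_true, if_false, Bool.false_eq_true] at h <;>
      first | rfl | linarith
  rintro (_ | ⟨i, b⟩) (_ | ⟨j, c⟩) h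
  · rfl
  · exact absurd ((PiLp.single_eq_zero_iff 1 j).1 h.symm) (hpos c).ne'
  · exact absurd ((PiLp.single_eq_zero_iff 1 i).1 h) (hpos b).ne'
  · have hi := congrArg (fun v => v.ofLp i) h
    simp only [toL1, PiLp.single_apply] at hi
    by_cases hij : i = j
    · subst hij
      rw [if_pos rfl] at hi
      rw [hheight hi]
    · exact absurd (hi.trans (if_neg hij)) (hpos b).ne'

noncomputable instance [Fact (0 < ε)] : MetricSpace (Spider k ε) :=
  MetricSpace.induced (toL1 ε) (toL1_injective Fact.out) inferInstance

lemma eq_center_or_knee_or_foot (x : Spider k ε) :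
    x = center ∨ (∃ i, x = knee i) ∨ ∃ i, x = foot i := by
  rcases x with _ | ⟨i, _ | _⟩
  exacts [.inl rfl, .inr (.inl ⟨i, rfl⟩), .inr (.inr ⟨i, rfl⟩)]

lemma knee_injective : Function.Injective (knee : Fin k → Spider k ε) := by
  intro i j h
  exact congrArg Prod.fst (Option.some_injective _ h)

def knees : Finset (Spider k ε) := univ.map ⟨knee, knee_injective⟩

lemma mem_knees {x : Spider k ε} : x ∈ knees ↔ ∃ i, knee i = x := by
  simp [knees]

lemma knee_mem_knees (i : Fin k) : (knee i : Spider k ε) ∈ knees := mem_knees.2 ⟨i, rfl⟩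

lemma center_notMem_knees : (center : Spider k ε) ∉ knees := by
  rintro h
  obtain ⟨i, hi⟩ := mem_knees.1 h
  exact Option.some_ne_none _ hi

lemma card_knees : #(knees : Finset (Spider k ε)) = k := by
  rw [knees, card_map, card_univ, Fintype.card_fin]

lemma card_compl_knees : #(kneesᶜ : Finset (Spider k ε)) = k + 1 := by
  rw [card_compl, card_knees, card_eq]
  omega

def parent : Spider k ε → Spider k ε
  | none => center
  | some (_, false) => center
  | some (i, true) => knee i

lemma parent_parent (x : Spider k ε) : parent (parent x) = center := by
  obtain rfl | ⟨i, rfl⟩ | ⟨i, rfl⟩ := x.eq_center_or_knee_or_foot <;> rfl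

@[simp] lemma toL1_center : toL1 ε (center : Spider k ε) = 0 := rfl

@[simp] lemma toL1_knee (i : Fin k) : toL1 ε (knee i : Spider k ε) = PiLp.single 1 i 1 := rfl

@[simp] lemma toL1_foot (i : Fin k) : toL1 ε (foot i : Spider k ε) = PiLp.single 1 i (1 + ε) := rfl

variable [Fact (0 < ε)]

lemma dist_eq (x y : Spider k ε) : dist x y = dist (toL1 ε x) (toL1 ε y) := rfl

lemma dist_knee_center (i : Fin k) : dist (knee i : Spider k ε) center = 1 := by
  simp [dist_eq]

lemma dist_foot_knee (i : Fin k) : dist (foot i : Spider k ε) (knee i) = ε := by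
  simp [dist_eq, PiLp.dist_single_same, abs_of_pos (Fact.out : 0 < ε)]

lemma dist_knee_knee {i j : Fin k} (hij : i ≠ j) : dist (knee i : Spider k ε) (knee j) = 2 := by
  rw [dist_eq, toL1_knee, toL1_knee, PiLp.dist_single_of_ne hij]
  norm_num

lemma dist_center_foot (i : Fin k) : dist (center : Spider k ε) (foot i) = 1 + ε := by
  have := (Fact.out : 0 < ε)
  simp [dist_eq, abs_of_pos (by linarith : 0 < 1 + ε)]

lemma dist_foot_foot {i j : Fin k} (hij : i ≠ j) :
    dist (foot i : Spider k ε) (foot j) = 2 * (1 + ε) := by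
  have := (Fact.out : 0 < ε)
  rw [dist_eq, toL1_foot, toL1_foot, PiLp.dist_single_of_ne hij, Real.norm_of_nonneg (by linarith)]
  ring

lemma sum_dist_parent : ∑ x : Spider k ε, dist x (parent x) = k * (1 + ε) := by
  refine (Fintype.sum_option fun x : Spider k ε => dist x (parent x)).trans ?_
  simp only [Fintype.sum_prod_type, Fintype.sum_bool]
  change dist center center + ∑ i : Fin k, (dist (foot i) (knee i) + dist (knee i) center) = _
  simp only [dist_self, dist_foot_knee, dist_knee_center, sum_const, card_univ, Fintype.card_fin,
    nsmul_eq_mul, zero_add]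
  ring

lemma mst_univ_le : mst (univ : Finset (Spider k ε)) ≤ k * (1 + ε) :=
  (mst_le_sum_dist_of_iterate_eq parent (fun _ _ => mem_univ _) (mem_univ center)
    fun x _ => ⟨2, parent_parent x⟩).trans_eq sum_dist_parent

lemma two_mul_le_mst_knees (hk : 0 < k) : 2 * (k - 1) ≤ mst (knees : Finset (Spider k ε)) := by
  have hd : ∀ x ∈ (knees : Finset (Spider k ε)), ∀ y ∈ knees, x ≠ y → 2 ≤ dist x y := by
    simp only [mem_knees]
    rintro _ ⟨i, rfl⟩ _ ⟨j, rfl⟩ hij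
    rw [dist_knee_knee (ne_of_apply_ne knee hij)]
  simpa [card_knees] using mul_card_sub_one_le_mst ⟨_, knee_mem_knees ⟨0, hk⟩⟩ hd

lemma one_add_mul_le_mst_compl_knees : (1 + ε) * k ≤ mst (kneesᶜ : Finset (Spider k ε)) := by
  have := (Fact.out : 0 < ε)
  have hd : ∀ x ∈ (kneesᶜ : Finset (Spider k ε)), ∀ y ∈ kneesᶜ, x ≠ y → 1 + ε ≤ dist x y := by
    intro x hx y hy hxy
    rw [mem_compl] at hx hy
    obtain rfl | ⟨i, rfl⟩ | ⟨i, rfl⟩ := x.eq_center_or_knee_or_foot <;>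
      obtain rfl | ⟨j, rfl⟩ | ⟨j, rfl⟩ := y.eq_center_or_knee_or_foot
    all_goals first
      | exact absurd rfl hxy
      | exact absurd (knee_mem_knees _) ‹_›
      | skip
    · rw [dist_center_foot]
    · rw [dist_comm, dist_center_foot]
    · rw [dist_foot_foot (ne_of_apply_ne foot hxy)]
      linarith
  simpa [card_compl_knees] using
    mul_card_sub_one_le_mst ⟨_, mem_compl.2 center_notMem_knees⟩ hd

end Spider

theorem exists_metric_space_mst_ratio_near_three (k : ℕ) (hk : 1 ≤ k) (ε : ℝ) (hε : 0 < ε) :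
    ∃ (X : Type) (_ : MetricSpace X) (S : Finset X),
      S.card = 2 * k + 1 ∧ (∀ x : X, x ∈ S) ∧
      ∃ R B : Finset X, R.Nonempty ∧ B.Nonempty ∧ Disjoint R B ∧ R ∪ B = S ∧
        ((3 - 4 / (((2 * k + 1 : ℕ) : ℝ) - 1)) / (1 + ε)) * mst S ≤ mst R + mst B := by
  have : Fact (0 < ε) := ⟨hε⟩
  refine ⟨Spider k ε, inferInstance, univ, Spider.card_eq, mem_univ, Spider.knees, Spider.kneesᶜ,
    ⟨_, Spider.knee_mem_knees ⟨0, hk⟩⟩, ⟨_, mem_compl.2 Spider.center_notMem_knees⟩,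
    disjoint_compl_right, union_compl _, ?_⟩
  have hk' : (1 : ℝ) ≤ k := by exact_mod_cast hk
  have hratio : (3 - 4 / (((2 * k + 1 : ℕ) : ℝ) - 1)) / (1 + ε) = (3 * k - 2) / (k * (1 + ε)) := by
    push_cast
    field_simp
    ring
  calc (3 - 4 / (((2 * k + 1 : ℕ) : ℝ) - 1)) / (1 + ε) * mst univ
      ≤ (3 * k - 2) / (k * (1 + ε)) * (k * (1 + ε)) := by
        rw [hratio]
        exact mul_le_mul_of_nonneg_left Spider.mst_univ_le
          (div_nonneg (by linarith) (by positivity))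
    _ = 2 * (k - 1) + k := by field_simp; ring
    _ ≤ 2 * (k - 1) + (1 + ε) * k := by nlinarith
    _ ≤ mst Spider.knees + mst Spider.kneesᶜ :=
      add_le_add (Spider.two_mul_le_mst_knees hk) Spider.one_add_mul_le_mst_compl_knees
end

section
/- Let T be a tree on n vertices with n ≥ 5, equipped with nonnegative real edge weights, let W be the total weight of all edges of T, and let W_L be the total weight of those edges of T that are incident to at least one leaf of T. Then there exist (not necessarily distinct) non-leaf vertices u and v of T such that the total weight of the unique u–v path in T, plus W_L, is at least (4/(n−1)) · W. -/
/-!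
Call `P` the set of non-leaves with at most one non-leaf neighbour: the leaves of the tree that
remains after deleting all leaves. Deleting an internal edge (one with two non-leaf ends) leaves
a vertex of `P` on each side, so the edge separates at least `2 (|P| - 1)` of the `|P| (|P| - 1)`
ordered pairs of distinct vertices of `P`. Averaging, some pair `u, v` in `P` is joined by a path
carrying at least `2 / |P|` of the internal weight. Distinct vertices of `P` have distinct leaf
neighbours, and `P` misses a non-leaf unless there are at most two non-leaves, so `2 |P| < n` and
`2 / |P| ≥ 4 / (n - 1)`. The leaf edges are paid for by `W_L`, since `4 / (n - 1) ≤ 1`.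
-/

open scoped Classical

open SimpleGraph Finset

namespace SimpleGraph

variable {V : Type*} {G : SimpleGraph V}

lemma IsTree.eq_of_adj_of_dist_lt (hT : G.IsTree) {x y y' b : V} (hy : G.Adj x y)
    (hy' : G.Adj x y') (hyb : G.dist y b < G.dist x b) (hy'b : G.dist y' b < G.dist x b) :
    y = y' := by
  have avoids : ∀ {z}, G.dist z b < G.dist x b → ∃ r : G.Walk z b, r.IsPath ∧ x ∉ r.support := by
    intro z hzb
    obtain ⟨r, hr, hlen⟩ := (hT.connected z b).exists_path_of_dist
    refine ⟨r, hr, fun hx => ?_⟩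
    have := (G.dist_le (r.dropUntil x hx)).trans (r.length_dropUntil_le_length hx)
    omega
  obtain ⟨r, hr, hxr⟩ := avoids hyb
  obtain ⟨r', hr', hxr'⟩ := avoids hy'b
  have := congrArg (fun p : G.Path x b => p.1.snd) <| (hT.isAcyclic.subsingleton_path x b).elim
    ⟨_, hr.cons hxr (h := hy)⟩ ⟨_, hr'.cons hxr' (h := hy')⟩
  simpa using this

lemma degree_ne_one_of_adj_of_adj {v a b : V} [Fintype (G.neighborSet v)] (ha : G.Adj v a)
    (hb : G.Adj v b) (hab : a ≠ b) : G.degree v ≠ 1 := by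
  intro h
  obtain ⟨c, -, hc⟩ := degree_eq_one_iff_existsUnique_adj.mp h
  exact hab ((hc a ha).trans (hc b hb).symm)

lemma Walk.IsPath.degree_getVert_ne_one [LocallyFinite G] {u v : V} {p : G.Walk u v}
    (hp : p.IsPath) {i : ℕ} (h0 : i ≠ 0) (hi : i < p.length) : G.degree (p.getVert i) ≠ 1 := by
  have hprev := p.adj_getVert_succ (i := i - 1) (by omega)
  rw [Nat.sub_add_cancel (by omega)] at hprev
  refine degree_ne_one_of_adj_of_adj hprev.symm (p.adj_getVert_succ hi) fun h => ?_
  have := hp.getVert_injOn (by simp; omega) (by simp; omega) h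
  omega

variable (G) in
noncomputable def cutWeight (w : Sym2 V → ℝ) (E : Finset (Sym2 V)) (x y : V) : ℝ :=
  ∑ e ∈ E with ¬ (G.deleteEdges {e}).Reachable x y, w e

lemma cutWeight_nonneg {w : Sym2 V → ℝ} {E : Finset (Sym2 V)} (hw : ∀ e ∈ E, 0 ≤ w e)
    (x y : V) : 0 ≤ G.cutWeight w E x y :=
  sum_nonneg fun e he => hw e (filter_subset _ _ he)

lemma cutWeight_le_sum_edges {w : Sym2 V → ℝ} (hw : ∀ e ∈ G.edgeSet, 0 ≤ w e)
    (E : Finset (Sym2 V)) {x y : V} {q : G.Walk x y} (hq : q.IsPath) :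
    G.cutWeight w E x y ≤ (q.edges.map w).sum := by
  rw [← List.sum_toFinset w hq.edges_nodup]
  refine sum_le_sum_of_subset_of_nonneg (fun e he => ?_)
    (fun e he _ => hw e (q.edges_subset_edgeSet (List.mem_toFinset.mp he)))
  exact List.mem_toFinset.mpr (q.mem_edges_of_not_reachable_deleteEdges (mem_filter.mp he).2)

lemma two_mul_card_le_card_offDiag_not_reachable (H : SimpleGraph V) {P : Finset V} {x₁ x₂ : V}
    (h₁ : x₁ ∈ P) (h₂ : x₂ ∈ P) (h : ¬ H.Reachable x₁ x₂) :
    2 * #P ≤ #{q ∈ P.offDiag | ¬ H.Reachable q.1 q.2} + 2 := by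
  set A := {x ∈ P | H.Reachable x₁ x}
  set B := {x ∈ P | ¬ H.Reachable x₁ x}
  have hAB : #A + #B = #P := card_filter_add_card_filter_not _
  have hA : 1 ≤ #A := card_pos.mpr ⟨x₁, mem_filter.mpr ⟨h₁, Reachable.refl _⟩⟩
  have hB : 1 ≤ #B := card_pos.mpr ⟨x₂, mem_filter.mpr ⟨h₂, h⟩⟩
  have hsub : A ×ˢ B ∪ B ×ˢ A ⊆ {q ∈ P.offDiag | ¬ H.Reachable q.1 q.2} := by
    rintro ⟨x, y⟩ hxy
    simp only [A, B, mem_union, mem_product, mem_filter] at hxy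
    simp only [mem_filter, mem_offDiag]
    rcases hxy with ⟨⟨hx, hrx⟩, hy, hry⟩ | ⟨⟨hx, hrx⟩, hy, hry⟩
    · exact ⟨⟨hx, hy, fun hxy => hry (hxy ▸ hrx)⟩, fun hr => hry (hrx.trans hr)⟩
    · exact ⟨⟨hx, hy, fun hxy => hrx (hxy ▸ hry)⟩, fun hr => hrx (hry.trans hr.symm)⟩
  have hdisj : Disjoint (A ×ˢ B) (B ×ˢ A) := by
    rw [Finset.disjoint_left]
    rintro ⟨x, y⟩ h h'
    exact (mem_filter.mp (mem_product.mp h').1).2 (mem_filter.mp (mem_product.mp h).1).2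
  have := card_le_card hsub
  rw [card_union_of_disjoint hdisj, card_product, card_product] at this
  nlinarith

lemma exists_two_mul_sum_le_card_mul_cutWeight {w : Sym2 V → ℝ} {P : Finset V}
    {E : Finset (Sym2 V)} (hE : E.Nonempty) (hw : ∀ e ∈ E, 0 ≤ w e)
    (hsep : ∀ e ∈ E, ∃ x ∈ P, ∃ y ∈ P, ¬ (G.deleteEdges {e}).Reachable x y) :
    ∃ x ∈ P, ∃ y ∈ P, 2 * ∑ e ∈ E, w e ≤ #P * G.cutWeight w E x y := by
  obtain ⟨e₀, he₀⟩ := hE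
  obtain ⟨x₀, hx₀, y₀, hy₀, hsep₀⟩ := hsep e₀ he₀
  have hK : P.offDiag.Nonempty :=
    ⟨(x₀, y₀), mem_offDiag.mpr ⟨hx₀, hy₀, fun h : x₀ = y₀ => hsep₀ (h ▸ Reachable.refl _)⟩⟩
  have hcard : (#P.offDiag : ℝ) = #P * (#P - 1) := by
    rw [offDiag_card, Nat.cast_sub (Nat.le_mul_self _)]
    push_cast
    ring
  have hdouble : ∑ q ∈ P.offDiag, G.cutWeight w E q.1 q.2 =
      ∑ e ∈ E, #{q ∈ P.offDiag | ¬ (G.deleteEdges {e}).Reachable q.1 q.2} * w e := by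
    simp_rw [cutWeight, sum_filter]
    rw [sum_comm]
    refine sum_congr rfl fun e _ => ?_
    rw [← sum_filter, sum_const, nsmul_eq_mul]
  have hsum : ∑ _q ∈ P.offDiag, 2 * ∑ e ∈ E, w e ≤
      ∑ q ∈ P.offDiag, #P * G.cutWeight w E q.1 q.2 := by
    calc ∑ _q ∈ P.offDiag, 2 * ∑ e ∈ E, w e = #P * ∑ e ∈ E, (2 * #P - 2) * w e := by
          rw [sum_const, nsmul_eq_mul, hcard, ← mul_sum]
          ring
      _ ≤ #P * ∑ e ∈ E, #{q ∈ P.offDiag | ¬ (G.deleteEdges {e}).Reachable q.1 q.2} * w e := by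
          gcongr with e he
          · exact hw e he
          · obtain ⟨x, hx, y, hy, hxy⟩ := hsep e he
            have := two_mul_card_le_card_offDiag_not_reachable _ hx hy hxy
            have : ((2 * #P : ℕ) : ℝ) ≤ ((_ + 2 : ℕ) : ℝ) := Nat.cast_le.mpr this
            push_cast at this
            linarith
      _ = ∑ q ∈ P.offDiag, #P * G.cutWeight w E q.1 q.2 := by rw [← mul_sum, hdouble]
  obtain ⟨⟨x, y⟩, hxy, hle⟩ := exists_le_of_sum_le hK hsum
  exact ⟨x, (mem_offDiag.mp hxy).1, y, (mem_offDiag.mp hxy).2.1, hle⟩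

section Finite

variable [Fintype V] [DecidableRel G.Adj]

variable (G) in
noncomputable def nonLeaves : Finset V := {v | G.degree v ≠ 1}

variable (G) in
/-- The leaves of the tree left after deleting all leaves of `G`, a lone vertex included. -/
noncomputable def prunedLeaves : Finset V :=
  {v | G.degree v ≠ 1 ∧ {u | G.Adj v u ∧ G.degree u ≠ 1}.Subsingleton}

@[simp]
lemma mem_nonLeaves {v : V} : v ∈ G.nonLeaves ↔ G.degree v ≠ 1 := by
  simp [nonLeaves]

lemma mem_prunedLeaves {v : V} :
    v ∈ G.prunedLeaves ↔ G.degree v ≠ 1 ∧ {u | G.Adj v u ∧ G.degree u ≠ 1}.Subsingleton := by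
  simp [prunedLeaves]

lemma prunedLeaves_subset_nonLeaves : G.prunedLeaves ⊆ G.nonLeaves := fun _ hv =>
  mem_nonLeaves.mpr (mem_prunedLeaves.mp hv).1

lemma eq_of_mem_prunedLeaves {v a b : V} (hv : v ∈ G.prunedLeaves) (ha : G.Adj v a)
    (ha' : G.degree a ≠ 1) (hb : G.Adj v b) (hb' : G.degree b ≠ 1) : a = b :=
  (mem_prunedLeaves.mp hv).2 ⟨ha, ha'⟩ ⟨hb, hb'⟩

lemma IsTree.nonLeaves_nonempty (hT : G.IsTree) (hn : 3 ≤ Fintype.card V) :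
    G.nonLeaves.Nonempty := by
  by_contra! h
  have hleaf : ∀ v, G.degree v = 1 := fun v => by
    by_contra hv
    simpa [h] using mem_nonLeaves.mpr hv
  have := G.sum_degrees_eq_twice_card_edges
  have := hT.card_edgeFinset
  simp only [hleaf, sum_const, card_univ, smul_eq_mul, mul_one] at *
  omega

lemma IsTree.adj_of_nonLeaves_subset_prunedLeaves (hT : G.IsTree)
    (hP : G.nonLeaves ⊆ G.prunedLeaves) {x y : V} (hx : G.degree x ≠ 1) (hy : G.degree y ≠ 1)
    (hxy : x ≠ y) : G.Adj x y := by
  obtain ⟨q, hq⟩ := hT.connected.exists_isPath x y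
  by_contra hn
  have hlen : 2 ≤ q.length := by
    by_contra! h
    interval_cases hl : q.length
    · exact hxy (q.eq_of_length_eq_zero hl)
    · exact hn (q.adj_of_length_eq_one hl)
  have h1 : G.degree (q.getVert 1) ≠ 1 := hq.degree_getVert_ne_one one_ne_zero (by omega)
  have h2 : G.degree (q.getVert 2) ≠ 1 := by
    rcases hlen.eq_or_lt with h | h
    · rwa [h, q.getVert_length]
    · exact hq.degree_getVert_ne_one two_ne_zero h
  have h10 := (q.adj_getVert_succ (i := 0) (by omega)).symm
  rw [q.getVert_zero] at h10
  have h02 := eq_of_mem_prunedLeaves (hP (mem_nonLeaves.mpr h1)) h10 hx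
    (q.adj_getVert_succ (i := 1) (by omega)) h2
  have := hq.getVert_injOn (x₁ := 0) (x₂ := 2) (by simp) (by simp; omega) (by rwa [q.getVert_zero])
  omega

lemma IsTree.card_nonLeaves_le_two (hT : G.IsTree) (hP : G.nonLeaves ⊆ G.prunedLeaves) :
    #G.nonLeaves ≤ 2 := by
  by_contra! h
  obtain ⟨x, hx, y, hy, z, hz, hxy, hxz, hyz⟩ := two_lt_card.mp h
  rw [mem_nonLeaves] at hx hy hz
  exact hyz <| eq_of_mem_prunedLeaves (hP (mem_nonLeaves.mpr hx))
    (hT.adj_of_nonLeaves_subset_prunedLeaves hP hx hy hxy) hy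
    (hT.adj_of_nonLeaves_subset_prunedLeaves hP hx hz hxz) hz

lemma IsTree.card_prunedLeaves_le_card_leaves [Nontrivial V] (hT : G.IsTree) :
    #G.prunedLeaves ≤ #{v | G.degree v = 1} := by
  refine card_le_card_of_forall_subsingleton G.Adj (fun x hx => ?_) (fun y hy => ?_)
  · have hdeg : 1 < #(G.neighborFinset x) := by
      have := hT.connected.preconnected.degree_pos_of_nontrivial x
      have := (mem_prunedLeaves.mp hx).1
      rw [card_neighborFinset_eq_degree]
      omega
    obtain ⟨a, ha, b, hb, hab⟩ := one_lt_card.mp hdeg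
    rw [mem_neighborFinset] at ha hb
    by_contra! hleaf
    exact hab <| eq_of_mem_prunedLeaves hx ha (fun h => hleaf a (by simpa using h) ha)
      hb (fun h => hleaf b (by simpa using h) hb)
  · obtain ⟨c, -, hc⟩ := degree_eq_one_iff_existsUnique_adj.mp (by simpa using hy)
    rintro a ⟨-, ha⟩ b ⟨-, hb⟩
    exact (hc a ha.symm).trans (hc b hb.symm).symm

lemma IsTree.two_mul_card_prunedLeaves_lt (hT : G.IsTree) (hn : 5 ≤ Fintype.card V) :
    2 * #G.prunedLeaves < Fintype.card V := by
  have : Nontrivial V := Fintype.one_lt_card_iff_nontrivial.mp (by omega)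
  have hleaves := hT.card_prunedLeaves_le_card_leaves
  have hsplit : #{v | G.degree v = 1} + #G.nonLeaves = Fintype.card V :=
    card_filter_add_card_filter_not _
  by_cases hP : G.nonLeaves ⊆ G.prunedLeaves
  · have := hT.card_nonLeaves_le_two hP
    have := card_le_card (prunedLeaves_subset_nonLeaves (G := G))
    omega
  · have := card_lt_card ⟨prunedLeaves_subset_nonLeaves (G := G), hP⟩
    omega

lemma IsTree.exists_mem_prunedLeaves_reachable_deleteEdges (hT : G.IsTree) {a b : V}
    (hab : G.Adj a b) (ha : G.degree a ≠ 1) :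
    ∃ x ∈ G.prunedLeaves, (G.deleteEdges {s(a, b)}).Reachable a x := by
  set H := G.deleteEdges {s(a, b)}
  have hb : ¬ H.Reachable a b := isAcyclic_iff_forall_adj_isBridge.mp hT.isAcyclic hab
  -- the non-leaf on the side of `a` farthest from `b` has no non-leaf neighbour but the one
  -- towards `b`
  obtain ⟨x, hxS, hmax⟩ := exists_max_image {x ∈ G.nonLeaves | H.Reachable a x} (G.dist · b)
    ⟨a, by simp [ha]⟩
  simp only [mem_filter, mem_nonLeaves] at hxS hmax
  have hxb : x ≠ b := by rintro rfl; exact hb hxS.2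
  have hcloser : ∀ y, G.Adj x y → G.degree y ≠ 1 → G.dist y b < G.dist x b := by
    intro y hxy hy
    by_cases he : s(x, y) = s(a, b)
    · obtain ⟨rfl, rfl⟩ | ⟨rfl, rfl⟩ := Sym2.eq_iff.mp he
      · simpa using hT.connected.pos_dist_of_ne hxb
      · exact absurd rfl hxb
    · have hHxy : H.Adj x y := deleteEdges_adj.mpr ⟨hxy, by simpa using he⟩
      refine (hmax y ⟨hy, hxS.2.trans hHxy.reachable⟩).lt_of_ne ?_
      rw [dist_comm, dist_comm (v := b)]
      exact (hT.dist_ne_of_adj b hxy).symm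
  refine ⟨x, mem_prunedLeaves.mpr ⟨hxS.1, ?_⟩, hxS.2⟩
  rintro y ⟨hxy, hy⟩ y' ⟨hxy', hy'⟩
  exact hT.eq_of_adj_of_dist_lt hxy hxy' (hcloser y hxy hy) (hcloser y' hxy' hy')

variable (G) in
noncomputable def internalEdges : Finset (Sym2 V) := {e ∈ G.edgeFinset | ∀ x ∈ e, G.degree x ≠ 1}

lemma sum_edgeFinset_eq_sum_internalEdges_add (w : Sym2 V → ℝ) :
    ∑ e ∈ G.edgeFinset, w e = ∑ e ∈ G.internalEdges, w e +
      ∑ e ∈ G.edgeFinset.filter (fun e => ∃ x ∈ e, G.degree x = 1), w e := by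
  rw [← sum_filter_not_add_sum_filter G.edgeFinset (fun e => ∃ x ∈ e, G.degree x = 1)]
  simp only [internalEdges, not_exists, not_and]

lemma IsTree.exists_cutWeight_internalEdges_ge (hT : G.IsTree) (hn : 5 ≤ Fintype.card V)
    {w : Sym2 V → ℝ} (hw : ∀ e ∈ G.edgeSet, 0 ≤ w e) :
    ∃ u ∈ G.nonLeaves, ∃ v ∈ G.nonLeaves, 4 / ((Fintype.card V : ℝ) - 1) *
      ∑ e ∈ G.internalEdges, w e ≤ G.cutWeight w G.internalEdges u v := by
  rcases G.internalEdges.eq_empty_or_nonempty with hE | hE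
  · obtain ⟨u, hu⟩ := hT.nonLeaves_nonempty (by omega)
    refine ⟨u, hu, u, hu, ?_⟩
    rw [hE, sum_empty, mul_zero]
    exact cutWeight_nonneg (by simp) u u
  have hsep : ∀ e ∈ G.internalEdges, ∃ x ∈ G.prunedLeaves, ∃ y ∈ G.prunedLeaves,
      ¬ (G.deleteEdges {e}).Reachable x y := by
    intro e he
    induction e using Sym2.ind with | _ a b => ?_
    simp only [internalEdges, mem_filter, mem_edgeFinset, mem_edgeSet, Sym2.mem_iff,
      forall_eq_or_imp, forall_eq] at he
    obtain ⟨hab, ha, hb⟩ := he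
    obtain ⟨x, hx, hax⟩ := hT.exists_mem_prunedLeaves_reachable_deleteEdges hab ha
    obtain ⟨y, hy, hby⟩ := hT.exists_mem_prunedLeaves_reachable_deleteEdges hab.symm hb
    rw [Sym2.eq_swap] at hby
    exact ⟨x, hx, y, hy, fun hxy => isAcyclic_iff_forall_adj_isBridge.mp hT.isAcyclic hab
      (hax.trans (hxy.trans hby.symm))⟩
  have hw' : ∀ e ∈ G.internalEdges, 0 ≤ w e :=
    fun e he => hw e (mem_edgeFinset.mp (filter_subset _ _ he))
  obtain ⟨u, hu, v, hv, hle⟩ := exists_two_mul_sum_le_card_mul_cutWeight hE hw' hsep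
  refine ⟨u, prunedLeaves_subset_nonLeaves hu, v, prunedLeaves_subset_nonLeaves hv, ?_⟩
  have hP : (2 * #G.prunedLeaves : ℝ) + 1 ≤ Fintype.card V := by
    exact_mod_cast hT.two_mul_card_prunedLeaves_lt hn
  have hcut : 0 ≤ G.cutWeight w G.internalEdges u v := cutWeight_nonneg hw' u v
  have hn' : (5 : ℝ) ≤ Fintype.card V := by exact_mod_cast hn
  rw [div_mul_eq_mul_div, div_le_iff₀ (by linarith)]
  nlinarith

end Finite

end SimpleGraph

theorem exists_nonleaf_path_heavy {V : Type*} [Fintype V] (G : SimpleGraph V)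
    [DecidableRel G.Adj] (hT : G.IsTree) (hn : 5 ≤ Fintype.card V)
    (w : Sym2 V → ℝ) (hw : ∀ e ∈ G.edgeSet, 0 ≤ w e) :
    ∃ u v : V, G.degree u ≠ 1 ∧ G.degree v ≠ 1 ∧
      ∃ q : G.Walk u v, q.IsPath ∧
        4 / ((Fintype.card V : ℝ) - 1) * (∑ e ∈ G.edgeFinset, w e) ≤
          (q.edges.map w).sum +
            ∑ e ∈ G.edgeFinset.filter (fun e => ∃ x ∈ e, G.degree x = 1), w e := by
  obtain ⟨u, hu, v, hv, hcut⟩ := hT.exists_cutWeight_internalEdges_ge hn hw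
  obtain ⟨q, hq⟩ := hT.connected.exists_isPath u v
  refine ⟨u, v, mem_nonLeaves.mp hu, mem_nonLeaves.mp hv, q, hq, ?_⟩
  set leafWeight := ∑ e ∈ G.edgeFinset.filter (fun e => ∃ x ∈ e, G.degree x = 1), w e
  have hn' : (4 : ℝ) ≤ Fintype.card V - 1 := by
    have : (5 : ℝ) ≤ Fintype.card V := by exact_mod_cast hn
    linarith
  have hleaf : 4 / ((Fintype.card V : ℝ) - 1) * leafWeight ≤ leafWeight :=
    mul_le_of_le_one_left (sum_nonneg fun e he => hw e (mem_edgeFinset.mp (filter_subset _ _ he)))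
      ((div_le_one (by linarith)).mpr hn')
  rw [G.sum_edgeFinset_eq_sum_internalEdges_add, mul_add]
  exact add_le_add (hcut.trans (cutWeight_le_sum_edges hw _ hq)) hleaf
end

section
/- For every integer d ≥ 1, the limit as n → ∞ of the sum over k = 1, …, n−1 of C(n,k) · (k^{1−1/d} + (n−k)^{1−1/d}) / (n^{1−1/d} · (2^n − 2)) equals 2^{1/d}, where C(n,k) denotes the binomial coefficient. -/
/-!
With `α = 1 - 1/d ∈ [0, 1]`, dividing the `k`-th term by `n ^ α` turns the sum into
`∑ C(n,k) f(k/n)` with `f x = x ^ α + (1 - x) ^ α`, i.e. `2 ^ n` times the Bernstein approximation of `f` at `1/2`,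
minus the two endpoint terms. Bernstein approximations converge to `f`, the endpoint terms are
`O(2⁻ⁿ)` after normalisation, so the limit is `f (1/2) = 2 ^ (1 - α)`.
-/

open Finset Filter Topology unitInterval

theorem sum_range_succ_eq_add_sum_Ioo_add {M : Type*} [AddCommMonoid M] (g : ℕ → M) {n : ℕ}
    (hn : 0 < n) : ∑ k ∈ range (n + 1), g k = g 0 + ∑ k ∈ Ioo 0 n, g k + g n := by
  rw [Nat.range_succ_eq_Icc_zero, Icc_eq_cons_Ico (Nat.zero_le n), sum_cons,
    Ico_eq_cons_Ioo hn, sum_cons]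
  abel

theorem tendsto_sum_range_choose_mul_pow_mul {f : ℝ → ℝ} (hf : ContinuousOn f (Set.Icc 0 1))
    {x : ℝ} (hx : x ∈ Set.Icc 0 1) :
    Tendsto (fun n : ℕ => ∑ k ∈ range (n + 1), (n.choose k : ℝ) * x ^ k * (1 - x) ^ (n - k) *
      f (k / n)) atTop (𝓝 (f x)) := by
  let g : C(I, ℝ) := ⟨Set.domRestrict _ f, hf.domRestrict⟩
  have h := ((continuous_eval_const (⟨x, hx⟩ : I)).tendsto g).comp
    (bernsteinApproximation_uniform g)
  refine h.congr fun n => ?_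
  simp only [Function.comp_apply, bernsteinApproximation.apply, bernstein_apply, smul_eq_mul]
  exact Fin.sum_univ_eq_sum_range (fun k => (n.choose k : ℝ) * x ^ k * (1 - x) ^ (n - k) *
    f (k / n)) (n + 1)

theorem tendsto_sum_range_choose_mul_div_two_pow {f : ℝ → ℝ}
    (hf : ContinuousOn f (Set.Icc 0 1)) :
    Tendsto (fun n : ℕ => ∑ k ∈ range (n + 1), (n.choose k : ℝ) * f (k / n) / 2 ^ n) atTop
      (𝓝 (f (1 / 2))) := by
  refine (tendsto_sum_range_choose_mul_pow_mul hf ⟨by norm_num, by norm_num⟩).congr fun n =>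
    sum_congr rfl fun k hk => ?_
  have hkn : k ≤ n := Nat.lt_succ_iff.mp (mem_range.mp hk)
  rw [show (1 : ℝ) - 1 / 2 = 1 / 2 by norm_num, mul_assoc _ ((1 / 2 : ℝ) ^ k),
    pow_mul_pow_sub _ hkn, one_div_pow]
  field_simp

theorem tendsto_sum_Ioo_choose_mul_div_two_pow_sub_two {f : ℝ → ℝ}
    (hf : ContinuousOn f (Set.Icc 0 1)) :
    Tendsto (fun n : ℕ => ∑ k ∈ Ioo 0 n, (n.choose k : ℝ) * f (k / n) / (2 ^ n - 2)) atTop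
      (𝓝 (f (1 / 2))) := by
  have hinv : Tendsto (fun n : ℕ => ((2 : ℝ) ^ n)⁻¹) atTop (𝓝 0) :=
    tendsto_inv_atTop_zero.comp (tendsto_pow_atTop_atTop_of_one_lt one_lt_two)
  have h := ((tendsto_sum_range_choose_mul_div_two_pow hf).sub (hinv.const_mul (f 0 + f 1))).div
    (tendsto_const_nhds.sub (hinv.const_mul 2)) (by norm_num : (1 : ℝ) - 2 * 0 ≠ 0)
  rw [mul_zero, mul_zero, sub_zero, sub_zero, div_one] at h
  refine h.congr' ?_
  filter_upwards [eventually_ge_atTop 2] with n hn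
  have hpow : (2 : ℝ) ^ n - 2 ≠ 0 := by
    have : (2 : ℝ) ^ 2 ≤ 2 ^ n := pow_le_pow_right₀ one_le_two hn
    linarith
  have hn0 : (n : ℝ) ≠ 0 := by positivity
  rw [Pi.div_apply, ← sum_div, ← sum_div, sum_range_succ_eq_add_sum_Ioo_add _ (by omega)]
  simp only [Nat.choose_zero_right, Nat.choose_self, CharP.cast_eq_zero, zero_div, div_self hn0,
    Nat.cast_one, one_mul]
  field_simp
  ring

theorem rpow_add_sub_rpow_eq_mul {α a b : ℝ} (ha : 0 ≤ a) (hab : a ≤ b) (hb : 0 < b) :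
    a ^ α + (b - a) ^ α = b ^ α * ((a / b) ^ α + (1 - a / b) ^ α) := by
  rw [one_sub_div hb.ne', Real.div_rpow ha hb.le, Real.div_rpow (sub_nonneg.2 hab) hb.le]
  field_simp [(Real.rpow_pos_of_pos hb α).ne']

theorem tendsto_sum_Ioo_choose_mul_rpow_add_rpow {α : ℝ} (hα : 0 ≤ α) :
    Tendsto (fun n : ℕ => ∑ k ∈ Ioo 0 n, (n.choose k : ℝ) *
      ((k : ℝ) ^ α + ((n - k : ℕ) : ℝ) ^ α) / ((n : ℝ) ^ α * (2 ^ n - 2))) atTop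
      (𝓝 (2 ^ (1 - α))) := by
  have hf : Continuous fun x : ℝ => x ^ α + (1 - x) ^ α := by
    have := Real.continuous_rpow_const hα
    fun_prop
  have hf_half : (1 / 2 : ℝ) ^ α + (1 - 1 / 2) ^ α = 2 ^ (1 - α) := by
    rw [show (1 : ℝ) - 1 / 2 = 1 / 2 by norm_num, ← two_mul, one_div, Real.inv_rpow zero_le_two,
      Real.rpow_sub two_pos, Real.rpow_one, div_eq_mul_inv]
  rw [← hf_half]
  refine (tendsto_sum_Ioo_choose_mul_div_two_pow_sub_two hf.continuousOn).congr' ?_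
  filter_upwards [eventually_gt_atTop 0] with n hn
  refine sum_congr rfl fun k hk => ?_
  have hkn : k ≤ n := (mem_Ioo.mp hk).2.le
  have hn' : (0 : ℝ) < n := Nat.cast_pos.mpr hn
  rw [Nat.cast_sub hkn, rpow_add_sub_rpow_eq_mul k.cast_nonneg (Nat.cast_le.mpr hkn) hn',
    mul_left_comm, mul_div_mul_left _ _ (Real.rpow_pos_of_pos hn' α).ne']

theorem tendsto_average_ratio_sum_general (d : ℕ) :
    Filter.Tendsto (fun n : ℕ =>
        ∑ k ∈ Finset.Ioo 0 n,
          (n.choose k : ℝ) *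
              ((k : ℝ) ^ ((1 : ℝ) - 1 / (d : ℝ)) + ((n - k : ℕ) : ℝ) ^ ((1 : ℝ) - 1 / (d : ℝ))) /
            ((n : ℝ) ^ ((1 : ℝ) - 1 / (d : ℝ)) * (2 ^ n - 2)))
      Filter.atTop (nhds ((2 : ℝ) ^ ((1 : ℝ) / (d : ℝ)))) := by
  have hα : 0 ≤ (1 : ℝ) - 1 / d := sub_nonneg.2 (one_div (d : ℝ) ▸ Nat.cast_inv_le_one d)
  simpa only [sub_sub_cancel] using tendsto_sum_Ioo_choose_mul_rpow_add_rpow hα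

theorem tendsto_average_ratio_sum (d : ℕ) (hd : 1 ≤ d) :
    Filter.Tendsto (fun n : ℕ =>
        ∑ k ∈ Finset.Ioo 0 n,
          (n.choose k : ℝ) *
              ((k : ℝ) ^ ((1 : ℝ) - 1 / (d : ℝ)) + ((n - k : ℕ) : ℝ) ^ ((1 : ℝ) - 1 / (d : ℝ))) /
            ((n : ℝ) ^ ((1 : ℝ) - 1 / (d : ℝ)) * (2 ^ n - 2)))
      Filter.atTop (nhds ((2 : ℝ) ^ ((1 : ℝ) / (d : ℝ)))) :=
  tendsto_average_ratio_sum_general d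
end

section
/- Let G be a simple graph on a finite vertex set V with |V| = n ≥ 3, and define a weight function w on unordered pairs of distinct vertices by w({u,v}) = n if {u,v} is an edge of G and w({u,v}) = 1 otherwise. If G contains a clique of size ℓ with ℓ ≥ 3, then there exists a proper bipartition V = R ∪ B such that mst_w(R) + mst_w(B) ≥ (ℓ − 2) · n. -/
open scoped Classical

/-- The minimum, over all trees with vertex set `U`, of the sum of the weights `w`
of the edges of the tree (weights are given on unordered pairs). -/
noncomputable def mstW {V : Type*} (w : Sym2 V → ℝ) (U : Finset V) : ℝ :=
  sInf {c : ℝ | ∃ G : SimpleGraph U, G.IsTree ∧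
    c = ∑ᶠ e ∈ G.edgeSet, w (e.map (fun v : U => (v : V)))}

/-! Let `R` be the clique with one vertex removed and `B` the rest of `V`. All pairs inside `R`
weigh `n`, so every tree on the `ℓ - 1` vertices of `R` costs exactly `(ℓ - 2) n`, while weights
are nonnegative, so `mst_w(B) ≥ 0`. -/

open Finset SimpleGraph

lemma SimpleGraph.IsTree.finsum_edgeSet_eq_of_forall_eq {U R : Type*} [Finite U] [Ring R]
    {T : SimpleGraph U} (hT : T.IsTree) {f : Sym2 U → R} {c : R}
    (hf : ∀ e ∈ T.edgeSet, f e = c) :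
    ∑ᶠ e ∈ T.edgeSet, f e = (Nat.card U - 1 : R) * c := by
  have hcard : (T.edgeSet.ncard : R) = Nat.card U - 1 := by
    rw [← (isTree_iff_connected_and_card.mp hT).2, Nat.card_coe_set_eq]; push_cast; abel
  rw [finsum_mem_congr rfl hf, finsum_mem_eq_finite_toFinset_sum _ (Set.toFinite _), sum_const,
    nsmul_eq_mul, ← hcard, Set.ncard_eq_toFinset_card]

section mstW

variable {V : Type*} {w : Sym2 V → ℝ} {U : Finset V}

lemma SimpleGraph.forall_map_val_of_mem_edgeSet {T : SimpleGraph U} {P : Sym2 V → Prop}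
    (hP : ∀ u ∈ U, ∀ v ∈ U, u ≠ v → P s(u, v)) :
    ∀ e ∈ T.edgeSet, P (e.map (↑)) := by
  rintro ⟨a, b⟩ hab
  exact hP a a.2 b b.2 (Subtype.coe_injective.ne (T.ne_of_adj hab))

lemma mstW_nonneg (hw : ∀ u v, u ≠ v → 0 ≤ w s(u, v)) : 0 ≤ mstW w U := by
  refine Real.sInf_nonneg ?_
  rintro _ ⟨T, -, rfl⟩
  exact finsum_mem_induction (0 ≤ ·) le_rfl (fun _ _ ↦ add_nonneg)
    (forall_map_val_of_mem_edgeSet (P := (0 ≤ w ·)) fun u _ v _ huv ↦ hw u v huv)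

lemma mstW_eq_of_forall_eq (hU : U.Nonempty) {c : ℝ}
    (hw : ∀ u ∈ U, ∀ v ∈ U, u ≠ v → w s(u, v) = c) :
    mstW w U = (#U - 1 : ℝ) * c := by
  have : Nonempty U := hU.to_subtype
  obtain ⟨T₀, -, hT₀⟩ := (connected_top (V := U)).exists_isTree_le
  have htree (T : SimpleGraph U) (hT : T.IsTree) :
      ∑ᶠ e ∈ T.edgeSet, w (e.map (↑)) = (#U - 1 : ℝ) * c := by
    rw [hT.finsum_edgeSet_eq_of_forall_eq (forall_map_val_of_mem_edgeSet (P := (w · = c)) hw),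
      Nat.card_eq_finsetCard]
  have hcosts : {x : ℝ | ∃ T : SimpleGraph U, T.IsTree ∧ x = ∑ᶠ e ∈ T.edgeSet, w (e.map (↑))} =
      {(#U - 1 : ℝ) * c} :=
    Set.eq_singleton_iff_unique_mem.mpr
      ⟨⟨T₀, hT₀, (htree T₀ hT₀).symm⟩, fun _ ⟨T, hT, hx⟩ ↦ hx ▸ htree T hT⟩
  rw [mstW, hcosts, csInf_singleton]

end mstW

theorem clique_gives_heavy_bipartition_general {V : Type*} [Fintype V] [DecidableEq V]
    (G : SimpleGraph V)
    (w : Sym2 V → ℝ)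
    (hw : ∀ u v : V, u ≠ v →
      w s(u, v) = if G.Adj u v then (Fintype.card V : ℝ) else 1)
    (ℓ : ℕ) (hℓ : 3 ≤ ℓ) (C : Finset V) (hCcard : C.card = ℓ)
    (hC : G.IsClique (C : Set V)) :
    ∃ R B : Finset V, R.Nonempty ∧ B.Nonempty ∧ Disjoint R B ∧
      R ∪ B = Finset.univ ∧ ((ℓ : ℝ) - 2) * (Fintype.card V : ℝ) ≤ mstW w R + mstW w B := by
  obtain ⟨v₀, hv₀⟩ : C.Nonempty := card_pos.mp (by omega)
  set R := C.erase v₀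
  have hRcard : #R = ℓ - 1 := by rw [card_erase_of_mem hv₀, hCcard]
  have hRne : R.Nonempty := card_pos.mp (by omega)
  refine ⟨R, Rᶜ, hRne, ⟨v₀, by simp [R]⟩, disjoint_compl_right, union_compl R, ?_⟩
  have hR : mstW w R = ((ℓ : ℝ) - 2) * Fintype.card V := by
    rw [mstW_eq_of_forall_eq hRne (c := Fintype.card V), hRcard, Nat.cast_sub (by omega)]
    · ring
    intro u hu v hv huv
    rw [hw u v huv, if_pos (hC (erase_subset _ _ hu) (erase_subset _ _ hv) huv)]
  have hB : 0 ≤ mstW w Rᶜ := mstW_nonneg (fun u v huv ↦ by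
    rw [hw u v huv]; split_ifs <;> positivity)
  linarith

theorem clique_gives_heavy_bipartition {V : Type*} [Fintype V] [DecidableEq V]
    (G : SimpleGraph V) (hn : 3 ≤ Fintype.card V)
    (w : Sym2 V → ℝ)
    (hw : ∀ u v : V, u ≠ v →
      w s(u, v) = if G.Adj u v then (Fintype.card V : ℝ) else 1)
    (ℓ : ℕ) (hℓ : 3 ≤ ℓ) (C : Finset V) (hCcard : C.card = ℓ)
    (hC : G.IsClique (C : Set V)) :
    ∃ R B : Finset V, R.Nonempty ∧ B.Nonempty ∧ Disjoint R B ∧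
      R ∪ B = Finset.univ ∧ ((ℓ : ℝ) - 2) * (Fintype.card V : ℝ) ≤ mstW w R + mstW w B :=
  clique_gives_heavy_bipartition_general G w hw ℓ hℓ C hCcard hC
end

section
/- Let G be a simple graph on a finite vertex set V with |V| = n ≥ 3, and define a weight function w on unordered pairs of distinct vertices by w({u,v}) = n if {u,v} is an edge of G and w({u,v}) = 1 otherwise. If V = R ∪ B is a proper bipartition with mst_w(R) + mst_w(B) = k, then G contains a clique of size at least ⌊k/n⌋/2 + 1. -/
open scoped Classical

/-!
Take a maximal clique `C` inside each side `U` of the bipartition. Joining one vertex of `C`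
to the rest of `C` and every vertex of `U \ C` to a non-neighbour in `C` gives a spanning tree
of `U` of weight `|U| - |C| + n (|C| - 1)`. Summing over both sides, `k < n (a + b - 1)` for the
sizes `a`, `b` of the two cliques, so `⌊k / n⌋ / 2 + 1 ≤ (a + b) / 2 ≤ max a b`.
-/

open Finset

section ParentGraph

variable {α : Type*} {r : α} {p : α → α} {h : α → ℕ}

def parentGraph (r : α) (p : α → α) : SimpleGraph α :=
  SimpleGraph.fromEdgeSet ((fun v => s(v, p v)) '' {v | v ≠ r})

lemma parentGraph_adj_parent (hp : ∀ v, v ≠ r → h (p v) < h v) {v : α} (hv : v ≠ r) :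
    (parentGraph r p).Adj v (p v) := by
  rw [parentGraph, SimpleGraph.fromEdgeSet_adj]
  exact ⟨⟨v, hv, rfl⟩, fun hvp => (hp v hv).ne (congrArg h hvp.symm)⟩

lemma parentGraph_reachable_root (hp : ∀ v, v ≠ r → h (p v) < h v) (v : α) :
    (parentGraph r p).Reachable v r := by
  induction hv : h v using Nat.strong_induction_on generalizing v with
  | _ n ih =>
    by_cases hvr : v = r
    · exact hvr ▸ .refl _
    · exact (parentGraph_adj_parent hp hvr).reachable.trans
        (ih _ (hv ▸ hp v hvr) (p v) rfl)

lemma injOn_parentEdge (hp : ∀ v, v ≠ r → h (p v) < h v) :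
    Set.InjOn (fun v => s(v, p v)) {v | v ≠ r} := by
  intro x hx y hy hxy
  rcases Sym2.eq_iff.1 hxy with ⟨hxy, -⟩ | ⟨hx', hy'⟩
  · exact hxy
  · subst hx'
    have h₁ := hp _ hx
    have h₂ := hp y hy
    rw [hy'] at h₁
    omega

lemma parentGraph_edgeSet (hp : ∀ v, v ≠ r → h (p v) < h v) :
    (parentGraph r p).edgeSet = (fun v => s(v, p v)) '' {v | v ≠ r} := by
  rw [parentGraph, SimpleGraph.edgeSet_fromEdgeSet, sdiff_eq_left, Set.disjoint_left]
  rintro _ ⟨v, hv, rfl⟩ hdiag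
  exact (hp v hv).ne (congrArg h (Sym2.mk_isDiag_iff.1 hdiag).symm)

-- Connected, and with `|α| - 1` edges because `v ↦ s(v, p v)` is injective off the root.
lemma parentGraph_isTree [Finite α] (hp : ∀ v, v ≠ r → h (p v) < h v) :
    (parentGraph r p).IsTree := by
  have : Nonempty α := ⟨r⟩
  rw [SimpleGraph.isTree_iff_connected_and_card]
  refine ⟨⟨fun x y => (parentGraph_reachable_root hp x).trans
    (parentGraph_reachable_root hp y).symm⟩, ?_⟩
  rw [Nat.card_coe_set_eq, parentGraph_edgeSet hp, (injOn_parentEdge hp).ncard_image,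
    ← Set.compl_singleton_eq, Set.ncard_compl, Set.ncard_singleton]
  have := Nat.card_pos (α := α)
  omega

lemma finsum_edgeSet_parentGraph {M : Type*} [AddCommMonoid M]
    (hp : ∀ v, v ≠ r → h (p v) < h v) (f : Sym2 α → M) :
    ∑ᶠ e ∈ (parentGraph r p).edgeSet, f e = ∑ᶠ v ∈ {v | v ≠ r}, f s(v, p v) := by
  rw [parentGraph_edgeSet hp, finsum_mem_image (injOn_parentEdge hp)]

end ParentGraph

section MinimumSpanningTree

variable {V : Type*} {w : Sym2 V → ℝ}

lemma mstW_le_of_isTree (hw : ∀ u v, u ≠ v → 0 ≤ w s(u, v)) {U : Finset V}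
    {T : SimpleGraph U} (hT : T.IsTree) :
    mstW w U ≤ ∑ᶠ e ∈ T.edgeSet, w (e.map (fun v : U => (v : V))) := by
  refine csInf_le ⟨0, ?_⟩ ⟨T, hT, rfl⟩
  rintro _ ⟨T', -, rfl⟩
  refine finsum_nonneg fun e => finsum_nonneg fun he => ?_
  induction e using Sym2.ind with
  | _ x y => exact hw x y fun hxy => T'.ne_of_adj he (Subtype.ext hxy)

lemma mstW_le_sum_parent (hw : ∀ u v, u ≠ v → 0 ≤ w s(u, v)) {U : Finset V} {r : V}
    (hr : r ∈ U) {p : V → V} (hpU : ∀ v ∈ U, p v ∈ U) {h : V → ℕ}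
    (hp : ∀ v ∈ U, v ≠ r → h (p v) < h v) :
    mstW w U ≤ ∑ v ∈ U.erase r, w s(v, p v) := by
  let P : U → U := fun v => ⟨p v, hpU v v.2⟩
  let hgt : U → ℕ := fun v => h v
  have hP : ∀ v : U, v ≠ ⟨r, hr⟩ → hgt (P v) < hgt v := fun v hv =>
    hp v v.2 fun hvr => hv (Subtype.ext hvr)
  have himage : Subtype.val '' {v : U | v ≠ ⟨r, hr⟩} = ↑(U.erase r) := by
    ext x
    simp [Subtype.ext_iff, and_comm]
  calc mstW w U ≤ ∑ᶠ e ∈ (parentGraph ⟨r, hr⟩ P).edgeSet, w (e.map (fun v : U => (v : V))) :=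
        mstW_le_of_isTree hw (parentGraph_isTree hP)
    _ = ∑ᶠ v ∈ {v : U | v ≠ ⟨r, hr⟩}, w s((v : V), p v) := finsum_edgeSet_parentGraph hP _
    _ = ∑ v ∈ U.erase r, w s(v, p v) := by
      rw [← finsum_mem_coe_finset, ← himage, finsum_mem_image Subtype.val_injective.injOn]

end MinimumSpanningTree

lemma SimpleGraph.exists_maximal_isClique_subset {V : Type*} (G : SimpleGraph V)
    {U : Finset V} (hU : U.Nonempty) :
    ∃ C ⊆ U, C.Nonempty ∧ G.IsClique (C : Set V) ∧ ∀ v ∈ U, v ∉ C → ∃ c ∈ C, ¬G.Adj v c := by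
  obtain ⟨u, hu⟩ := hU
  obtain ⟨C, huC, hCmem, hCmax⟩ :=
    (U.powerset.filter (fun C : Finset V => G.IsClique (C : Set V))).exists_le_maximal (a := {u})
      (by simp [hu])
  simp only [mem_filter, mem_powerset] at hCmem hCmax
  refine ⟨C, hCmem.1, ⟨u, singleton_subset_iff.1 huC⟩, hCmem.2, fun v hv hvC => ?_⟩
  by_contra! hadj
  have hins : G.IsClique (insert v C : Finset V) := by
    rw [coe_insert]
    exact hCmem.2.insert fun c hc _ => hadj c hc
  exact hvC (hCmax ⟨insert_subset hv hCmem.1, hins⟩ (subset_insert v C) (mem_insert_self v C))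

lemma mstW_le_of_maximal_isClique {V : Type*} {G : SimpleGraph V} {w : Sym2 V → ℝ} {N : ℝ}
    (hN : 0 ≤ N) (hw : ∀ u v, u ≠ v → w s(u, v) = if G.Adj u v then N else 1)
    {U C : Finset V} (hCU : C ⊆ U) (hC : C.Nonempty) (hclique : G.IsClique (C : Set V))
    (hmax : ∀ v ∈ U, v ∉ C → ∃ c ∈ C, ¬G.Adj v c) :
    mstW w U ≤ (#U - #C : ℝ) + N * (#C - 1) := by
  obtain ⟨c₀, hc₀⟩ := hC
  choose! f hfC hfadj using hmax
  let p : V → V := fun v => if v ∈ C then c₀ else f v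
  let h : V → ℕ := fun v => if v = c₀ then 0 else if v ∈ C then 1 else 2
  have hw_nonneg : ∀ u v, u ≠ v → 0 ≤ w s(u, v) := fun u v huv => by
    rw [hw u v huv]
    split_ifs <;> linarith
  have hpU : ∀ v ∈ U, p v ∈ U := fun v hv => by
    by_cases hvC : v ∈ C
    · simpa [p, hvC] using hCU hc₀
    · simpa [p, hvC] using hCU (hfC v hv hvC)
  have hp : ∀ v ∈ U, v ≠ c₀ → h (p v) < h v := fun v hv hvc => by
    by_cases hvC : v ∈ C
    · simp [p, h, hvC, hvc]
    · have := hfC v hv hvC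
      simp only [p, h, hvC, hvc, if_false]
      split_ifs <;> omega
  have hheavy : ∀ v ∈ C.erase c₀, w s(v, p v) = N := fun v hv => by
    obtain ⟨hvc, hvC⟩ := mem_erase.1 hv
    simp only [p, hvC, if_true, hw v c₀ hvc, hclique hvC hc₀ hvc]
  have hlight : ∀ v ∈ U \ C, w s(v, p v) = 1 := fun v hv => by
    obtain ⟨hvU, hvC⟩ := mem_sdiff.1 hv
    have hvf : v ≠ f v := fun h => hvC (h ▸ hfC v hvU hvC)
    simp only [p, hvC, if_false, hw v (f v) hvf, hfadj v hvU hvC]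
  have hsplit : U.erase c₀ = C.erase c₀ ∪ U \ C := by
    ext v
    by_cases hvC : v ∈ C
    · simp [hvC, hCU hvC]
    · simp [hvC, (ne_of_mem_of_not_mem hc₀ hvC).symm]
  have hdisj : Disjoint (C.erase c₀) (U \ C) :=
    disjoint_of_subset_left (erase_subset _ _) disjoint_sdiff
  calc mstW w U ≤ ∑ v ∈ U.erase c₀, w s(v, p v) := mstW_le_sum_parent hw_nonneg (hCU hc₀) hpU hp
    _ = (#U - #C : ℝ) + N * (#C - 1) := by
      rw [hsplit, sum_union hdisj, sum_congr rfl hheavy, sum_congr rfl hlight, sum_const,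
        sum_const, card_erase_of_mem hc₀, card_sdiff_of_subset hCU, nsmul_eq_mul, nsmul_eq_mul,
        Nat.cast_sub (card_pos.2 ⟨c₀, hc₀⟩), Nat.cast_sub (card_le_card hCU)]
      push_cast
      ring

theorem heavy_bipartition_gives_clique_general {V : Type*} [Fintype V]
    (G : SimpleGraph V)
    (w : Sym2 V → ℝ)
    (hw : ∀ u v : V, u ≠ v →
      w s(u, v) = if G.Adj u v then (Fintype.card V : ℝ) else 1)
    (R B : Finset V) (hR : R.Nonempty) (hB : B.Nonempty) (hRB : Disjoint R B)
    (k : ℝ) (hk : mstW w R + mstW w B = k) :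
    ∃ C : Finset V, G.IsClique (C : Set V) ∧
      ((⌊k / (Fintype.card V : ℝ)⌋ : ℝ) / 2 + 1) ≤ (C.card : ℝ) := by
  set n := Fintype.card V
  obtain ⟨CR, hCRR, hCR, hCRclique, hCRmax⟩ := G.exists_maximal_isClique_subset hR
  obtain ⟨CB, hCBB, hCB, hCBclique, hCBmax⟩ := G.exists_maximal_isClique_subset hB
  have hRB_card : (#R + #B : ℝ) ≤ n := by
    exact_mod_cast (card_union_of_disjoint hRB).symm.trans_le (card_le_univ _)
  have ha : (1 : ℝ) ≤ #CR := by exact_mod_cast card_pos.2 hCR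
  have hb : (1 : ℝ) ≤ #CB := by exact_mod_cast card_pos.2 hCB
  have hn : (0 : ℝ) < n := by
    have : (#CR : ℝ) ≤ #R := by exact_mod_cast card_le_card hCRR
    linarith
  have hk_lt : k < n * (#CR + #CB - 1) := by
    have := mstW_le_of_maximal_isClique hn.le hw hCRR hCR hCRclique hCRmax
    have := mstW_le_of_maximal_isClique hn.le hw hCBB hCB hCBclique hCBmax
    linarith
  have hfloor : (⌊k / n⌋ : ℝ) ≤ #CR + #CB - 2 := by
    have : ⌊k / n⌋ < (#CR : ℤ) + #CB - 1 := by
      rw [Int.floor_lt]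
      push_cast
      rw [div_lt_iff₀ hn]
      linarith
    have : ⌊k / n⌋ ≤ (#CR : ℤ) + #CB - 2 := by omega
    exact_mod_cast this
  rcases le_total (#CR : ℝ) #CB with hle | hle
  · exact ⟨CB, hCBclique, by linarith⟩
  · exact ⟨CR, hCRclique, by linarith⟩

theorem heavy_bipartition_gives_clique {V : Type*} [Fintype V] [DecidableEq V]
    (G : SimpleGraph V) (hn : 3 ≤ Fintype.card V)
    (w : Sym2 V → ℝ)
    (hw : ∀ u v : V, u ≠ v →
      w s(u, v) = if G.Adj u v then (Fintype.card V : ℝ) else 1)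
    (R B : Finset V) (hR : R.Nonempty) (hB : B.Nonempty) (hRB : Disjoint R B)
    (hU : R ∪ B = Finset.univ) (k : ℝ) (hk : mstW w R + mstW w B = k) :
    ∃ C : Finset V, G.IsClique (C : Set V) ∧
      ((⌊k / (Fintype.card V : ℝ)⌋ : ℝ) / 2 + 1) ≤ (C.card : ℝ) :=
  heavy_bipartition_gives_clique_general G w hw R B hR hB hRB k hk
end
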